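/- If m ≥ 2 and n ≥ 2 are integers with n ≡ 1 (mod 3), then the bondage number of K_m ⊠ P_n satisfies b(K_m ⊠ P_n) ≥ ⌈3m/2⌉; equivalently, for every edge set Z ⊆ E(K_m ⊠ P_n) with |Z| < ⌈3m/2⌉, one has γ(K_m ⊠ P_n − Z) = γ(K_m ⊠ P_n). -/

import Mathlib

open SimpleGraph Finset

/-- `D` is a dominating set of `G`: every vertex is in `D` or adjacent to a vertex of `D`. -/
def SimpleGraph.IsDominatingSet {V : Type*} (G : SimpleGraph V) (D : Set V) : Prop :=
  ∀ v : V, v ∈ D ∨ ∃ u ∈ D, G.Adj u v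

/-- The domination number of a finite graph. -/
noncomputable def SimpleGraph.dominationNumber {V : Type*} [Fintype V]
    (G : SimpleGraph V) : ℕ :=
  sInf {k | ∃ D : Finset V, D.card = k ∧ G.IsDominatingSet ↑D}

/-- The bondage number of a finite graph: the least size of a set of edges whose removal
increases the domination number. -/
noncomputable def SimpleGraph.bondageNumber {V : Type*} [Fintype V]
    (G : SimpleGraph V) : ℕ :=
  sInf {k | ∃ Z : Finset (Sym2 V), Z.card = k ∧ (↑Z : Set (Sym2 V)) ⊆ G.edgeSet ∧
    G.dominationNumber < (G.deleteEdges ↑Z).dominationNumber}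

/-- The strong product of two simple graphs. -/
def SimpleGraph.strongProd {V W : Type*} (G : SimpleGraph V) (H : SimpleGraph W) :
    SimpleGraph (V × W) :=
  SimpleGraph.fromRel (fun a b =>
    (a.1 = b.1 ∧ H.Adj a.2 b.2) ∨ (G.Adj a.1 b.1 ∧ a.2 = b.2) ∨
      (G.Adj a.1 b.1 ∧ H.Adj a.2 b.2))

infixl:70 " ⊠ " => SimpleGraph.strongProd

/-!
Write `n = 3k + 1`. A vertex of `K_m ⊠ P_n` dominates only vertices in its own column and the two
neighbouring ones, so every spanning subgraph has domination number at least `k + 1`, and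
`K_m ⊠ P_n` itself attains it with the columns `0, 3, …, 3k`.

Let `Z` be a set of edges with `2|Z| < 3m`. A vertex lying on no edge of `Z` still dominates its
three columns after `Z` is deleted. The edges of `Z` cover fewer than `3m` vertices, so some
residue class mod 3 consists of columns that all contain such a vertex. For the class of `0` the
columns `0, 3, …, 3k` give a dominating set of size `k + 1`. For the class of `1` (of `2`) the `k`
columns `1, 4, …, 3k - 2` (`2, 5, …, 3k - 1`) miss only the last (first) column, and that end
column is dominated by a vertex in it or next to it having no edge of `Z` into it: otherwise `Z`
would contain `m` edges from the neighbouring column into the end column and `m / 2` edges inside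
the end column.
-/

namespace SimpleGraph

theorem strongProd_adj {V W : Type*} {G : SimpleGraph V} {H : SimpleGraph W} {a b : V × W} :
    (G ⊠ H).Adj a b ↔ a ≠ b ∧ (a.1 = b.1 ∨ G.Adj a.1 b.1) ∧ (a.2 = b.2 ∨ H.Adj a.2 b.2) := by
  obtain ⟨a₁, a₂⟩ := a
  obtain ⟨b₁, b₂⟩ := b
  simp only [strongProd, fromRel_adj, ne_eq, Prod.mk.injEq, G.adj_comm b₁, H.adj_comm b₂,
    eq_comm (a := b₁), eq_comm (a := b₂)]
  tauto

variable {V : Type*}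

theorem isDominatingSet_iff_forall_exists (G : SimpleGraph V) {D : Set V} :
    G.IsDominatingSet D ↔ ∀ v, ∃ u ∈ D, u = v ∨ G.Adj u v := by
  refine forall_congr' fun v => ⟨?_, ?_⟩
  · rintro (hv | ⟨u, hu, huv⟩)
    exacts [⟨v, hv, Or.inl rfl⟩, ⟨u, hu, Or.inr huv⟩]
  · rintro ⟨u, hu, rfl | huv⟩
    exacts [Or.inl hu, Or.inr ⟨u, hu, huv⟩]

variable [Fintype V] (G : SimpleGraph V)

theorem dominationNumber_le_card {D : Finset V} (hD : G.IsDominatingSet ↑D) :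
    G.dominationNumber ≤ D.card :=
  Nat.sInf_le ⟨D, rfl, hD⟩

theorem le_dominationNumber {k : ℕ} (h : ∀ D : Finset V, G.IsDominatingSet ↑D → k ≤ D.card) :
    k ≤ G.dominationNumber :=
  le_csInf ⟨_, univ, rfl, fun v => Or.inl (by simp)⟩ (by rintro _ ⟨D, rfl, hD⟩; exact h D hD)

theorem dominationNumber_bot : (⊥ : SimpleGraph V).dominationNumber = Fintype.card V := by
  refine le_antisymm (dominationNumber_le_card _ (D := univ) fun v => Or.inl (by simp)) ?_
  refine le_dominationNumber _ fun D hD => ?_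
  rw [eq_univ_of_forall (s := D) fun v => by simpa using hD v, card_univ]

theorem le_bondageNumber {N : ℕ} (hG : G.dominationNumber < Fintype.card V)
    (h : ∀ Z : Finset (Sym2 V), ↑Z ⊆ G.edgeSet → Z.card < N →
      (G.deleteEdges ↑Z).dominationNumber ≤ G.dominationNumber) :
    N ≤ G.bondageNumber := by
  classical
  refine le_csInf ⟨_, G.edgeFinset, rfl, by simp, by simpa [dominationNumber_bot] using hG⟩ ?_
  rintro _ ⟨Z, rfl, hZ, hlt⟩
  by_contra! hN
  exact (h Z hZ hN).not_gt hlt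

end SimpleGraph

theorem card_le_two_mul_card_of_forall_exists_mem {V : Type*} [DecidableEq V]
    (Z : Finset (Sym2 V)) {s : Finset V} (h : ∀ v ∈ s, ∃ e ∈ Z, v ∈ e) :
    s.card ≤ 2 * Z.card :=
  calc s.card ≤ (Z.biUnion Sym2.toFinset).card := card_le_card fun v hv => by
        obtain ⟨e, he, hve⟩ := h v hv
        exact mem_biUnion.2 ⟨e, he, Sym2.mem_toFinset.2 hve⟩
    _ ≤ ∑ e ∈ Z, e.toFinset.card := card_biUnion_le
    _ ≤ ∑ _e ∈ Z, 2 := sum_le_sum fun e _ => by rw [Sym2.card_toFinset]; split_ifs <;> omega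
    _ = 2 * Z.card := by rw [sum_const, smul_eq_mul, mul_comm]

namespace CompleteStrongPath

variable {m n : ℕ}

local notation "𝒢" => (⊤ : SimpleGraph (Fin m)) ⊠ pathGraph n

theorem adj_iff {u v : Fin m × Fin n} :
    (𝒢).Adj u v ↔ u ≠ v ∧ u.2.val ≤ v.2.val + 1 ∧ v.2.val ≤ u.2.val + 1 := by
  simp only [strongProd_adj, top_adj, pathGraph_adj, Fin.ext_iff]
  constructor
  · rintro ⟨hne, -, h⟩
    exact ⟨hne, by omega⟩
  · rintro ⟨hne, h⟩
    exact ⟨hne, by rw [Fin.val_inj]; exact em _, by omega⟩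

theorem eq_or_adj_deleteEdges_of_near {Z : Set (Sym2 (Fin m × Fin n))} {u v : Fin m × Fin n}
    (h₁ : u.2.val ≤ v.2.val + 1) (h₂ : v.2.val ≤ u.2.val + 1) (hZ : s(u, v) ∉ Z) :
    u = v ∨ ((𝒢).deleteEdges Z).Adj u v := by
  rw [or_iff_not_imp_left, deleteEdges_adj, adj_iff]
  exact fun hne => ⟨⟨hne, h₁, h₂⟩, hZ⟩

theorem le_three_mul_card_of_isDominatingSet (hm : 0 < m) {H : SimpleGraph (Fin m × Fin n)}
    (hH : H ≤ 𝒢) {D : Finset (Fin m × Fin n)} (hD : H.IsDominatingSet ↑D) :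
    n ≤ 3 * D.card := by
  have hcols : range n ⊆ D.biUnion fun u => Icc (u.2.val - 1) (u.2.val + 1) := by
    intro c hc
    rw [mem_range] at hc
    obtain ⟨u, hu, huc⟩ := (isDominatingSet_iff_forall_exists H).1 hD (⟨0, hm⟩, ⟨c, hc⟩)
    refine mem_biUnion.2 ⟨u, hu, mem_Icc.2 ?_⟩
    rcases huc with rfl | huc
    · dsimp only
      omega
    · have := (adj_iff.1 (hH huc)).2
      dsimp only at this
      omega
  calc n = (range n).card := (card_range n).symm
    _ ≤ ∑ u ∈ D, (Icc (u.2.val - 1) (u.2.val + 1)).card :=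
      (card_le_card hcols).trans card_biUnion_le
    _ ≤ ∑ _u ∈ D, 3 := sum_le_sum fun u _ => by rw [Nat.card_Icc]; omega
    _ = 3 * D.card := by rw [sum_const, smul_eq_mul, mul_comm]

variable (Z : Finset (Sym2 (Fin m × Fin n)))

theorem exists_residue_forall_exists_untouched (hZ : 2 * Z.card < 3 * m) :
    ∃ r < 3, ∀ c : Fin n, c.val % 3 = r → ∃ a : Fin m, ∀ e ∈ Z, (a, c) ∉ e := by
  by_contra! h
  obtain ⟨c₀, h₀, hc₀⟩ := h 0 (by norm_num)
  obtain ⟨c₁, h₁, hc₁⟩ := h 1 (by norm_num)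
  obtain ⟨c₂, h₂, hc₂⟩ := h 2 (by norm_num)
  have hcard : ({c₀, c₁, c₂} : Finset (Fin n)).card = 3 :=
    card_eq_three.2 ⟨c₀, c₁, c₂, by rintro rfl; omega, by rintro rfl; omega,
      by rintro rfl; omega, rfl⟩
  have := card_le_two_mul_card_of_forall_exists_mem Z (s := univ ×ˢ {c₀, c₁, c₂})
    fun v hv => by
      obtain ⟨a, c⟩ := v
      simp only [mem_product, mem_univ, true_and, mem_insert, mem_singleton] at hv
      rcases hv with rfl | rfl | rfl
      exacts [hc₀ a, hc₁ a, hc₂ a]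
  rw [card_product, hcard, card_univ, Fintype.card_fin] at this
  omega

theorem exists_no_edge_into_column (hZ : 2 * Z.card < 3 * m) {x y : Fin n} (hxy : x ≠ y) :
    ∃ u : Fin m × Fin n, (u.2 = x ∨ u.2 = y) ∧ ∀ v : Fin m × Fin n, v.2 = x → s(u, v) ∉ Z := by
  classical
  by_contra! h
  let Zx := Z.filter fun e => ∀ w ∈ e, w.2 = x
  let Zy := Z.filter fun e => ∃ w ∈ e, w.2 = y
  have hdisj : Disjoint Zx Zy := disjoint_filter.2 fun e _ hex ⟨w, hw, hwy⟩ =>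
    hxy ((hex w hw).symm.trans hwy)
  have hZx : m ≤ 2 * Zx.card := by
    simpa using card_le_two_mul_card_of_forall_exists_mem Zx (s := univ ×ˢ {x}) fun u hu => by
      have hux : u.2 = x := mem_singleton.1 (mem_product.1 hu).2
      obtain ⟨v, hv, huv⟩ := h u (Or.inl hux)
      refine ⟨s(u, v), mem_filter.2 ⟨huv, fun w hw => ?_⟩, Sym2.mem_mk_left _ _⟩
      rcases Sym2.mem_iff.1 hw with rfl | rfl
      exacts [hux, hv]
  have hZy : m ≤ Zy.card := by
    choose v hv hvZ using fun a : Fin m => h (a, y) (Or.inr rfl)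
    have hinj : Function.Injective fun a => s(((a, y) : Fin m × Fin n), v a) := by
      intro a a' haa
      rcases Sym2.eq_iff.1 haa with ⟨h₁, -⟩ | ⟨h₁, -⟩
      · exact congrArg Prod.fst h₁
      · exact absurd ((congrArg Prod.snd h₁).trans (hv a')) hxy.symm
    calc m = (univ.image fun a => s(((a, y) : Fin m × Fin n), v a)).card := by
          rw [card_image_of_injective _ hinj, card_univ, Fintype.card_fin]
      _ ≤ Zy.card := card_le_card <| image_subset_iff.2 fun a _ =>
          mem_filter.2 ⟨hvZ a, _, Sym2.mem_mk_left _ _, rfl⟩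
  have := card_le_card (union_subset (filter_subset _ Z) (filter_subset _ Z) : Zx ∪ Zy ⊆ Z)
  rw [card_union_of_disjoint hdisj] at this
  omega

theorem dominationNumber_deleteEdges_le_of_untouched {N : ℕ} (col : ℕ → ℕ)
    (hcol : ∀ j < N, ∃ w : Fin m × Fin n, w.2.val = col j ∧ ∀ e ∈ Z, w ∉ e)
    (D₀ : Finset (Fin m × Fin n))
    (hcover : ∀ v : Fin m × Fin n, (∃ j < N, col j ≤ v.2.val + 1 ∧ v.2.val ≤ col j + 1) ∨
      ∃ u ∈ D₀, u = v ∨ ((𝒢).deleteEdges ↑Z).Adj u v) :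
    ((𝒢).deleteEdges ↑Z).dominationNumber ≤ N + D₀.card := by
  classical
  choose w hwcol hw using hcol
  let W := univ.image fun j : Fin N => w j j.2
  refine (dominationNumber_le_card _ (D := W ∪ D₀) ?_).trans ((card_union_le _ _).trans ?_)
  · refine (isDominatingSet_iff_forall_exists _).2 fun v => ?_
    rcases hcover v with ⟨j, hj, h₁, h₂⟩ | ⟨u, hu, huv⟩
    · have hwj : w j hj ∈ W ∪ D₀ :=
        mem_union_left _ (mem_image_of_mem (fun j : Fin N => w j j.2) (mem_univ ⟨j, hj⟩))
      have hwcolj := hwcol j hj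
      refine ⟨w j hj, hwj, ?_⟩
      exact eq_or_adj_deleteEdges_of_near (by omega) (by omega)
        fun he => hw j hj _ he (Sym2.mem_mk_left _ _)
    · exact ⟨u, mem_coe.2 (mem_union_right _ hu), huv⟩
  · gcongr
    simpa using card_image_le (s := (univ : Finset (Fin N)))

theorem dominationNumber_deleteEdges_le {k : ℕ} (hn : n = 3 * k + 1) (hk : 1 ≤ k)
    (hZ : 2 * Z.card < 3 * m) : ((𝒢).deleteEdges ↑Z).dominationNumber ≤ k + 1 := by
  obtain ⟨r, hr, hres⟩ := exists_residue_forall_exists_untouched Z hZ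
  have hcol : ∀ j, 3 * j + r < n →
      ∃ w : Fin m × Fin n, w.2.val = 3 * j + r ∧ ∀ e ∈ Z, w ∉ e := by
    intro j hj
    obtain ⟨a, ha⟩ := hres ⟨3 * j + r, by omega⟩ (by simp only; omega)
    exact ⟨(a, _), rfl, ha⟩
  interval_cases r
  · simpa using dominationNumber_deleteEdges_le_of_untouched Z (N := k + 1) (3 * ·)
      (fun j hj => hcol j (by omega)) ∅
      fun v => Or.inl ⟨(v.2.val + 1) / 3, by omega, by omega, by omega⟩
  · obtain ⟨u, hu, huZ⟩ := exists_no_edge_into_column Z hZ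
      (x := ⟨3 * k, by omega⟩) (y := ⟨3 * k - 1, by omega⟩)
      (by simp only [ne_eq, Fin.mk.injEq]; omega)
    have hu' : u.2.val = 3 * k ∨ u.2.val = 3 * k - 1 := by rcases hu with h | h <;> simp [h]
    refine (dominationNumber_deleteEdges_le_of_untouched Z (N := k) (3 * · + 1)
      (fun j hj => hcol j (by omega)) {u} fun v => ?_).trans (by simp)
    have := v.2.isLt
    by_cases hv : v.2.val = 3 * k
    · exact Or.inr ⟨u, mem_singleton_self u,
        eq_or_adj_deleteEdges_of_near (by omega) (by omega) (huZ v (Fin.ext hv))⟩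
    · exact Or.inl ⟨v.2.val / 3, by omega, by omega, by omega⟩
  · obtain ⟨u, hu, huZ⟩ := exists_no_edge_into_column Z hZ
      (x := ⟨0, by omega⟩) (y := ⟨1, by omega⟩) (by simp)
    have hu' : u.2.val = 0 ∨ u.2.val = 1 := by rcases hu with h | h <;> simp [h]
    refine (dominationNumber_deleteEdges_le_of_untouched Z (N := k) (3 * · + 2)
      (fun j hj => hcol j (by omega)) {u} fun v => ?_).trans (by simp)
    have := v.2.isLt
    by_cases hv : v.2.val = 0
    · exact Or.inr ⟨u, mem_singleton_self u,
        eq_or_adj_deleteEdges_of_near (by omega) (by omega) (huZ v (Fin.ext hv))⟩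
    · exact Or.inl ⟨(v.2.val - 1) / 3, by omega, by omega, by omega⟩

theorem dominationNumber_deleteEdges_eq {k : ℕ} (hn : n = 3 * k + 1) (hk : 1 ≤ k)
    (hZ : 2 * Z.card < 3 * m) : ((𝒢).deleteEdges ↑Z).dominationNumber = k + 1 :=
  le_antisymm (dominationNumber_deleteEdges_le Z hn hk hZ) <| le_dominationNumber _ fun D hD => by
    have := le_three_mul_card_of_isDominatingSet (by omega) (deleteEdges_le _) hD
    omega

theorem dominationNumber_eq {k : ℕ} (hn : n = 3 * k + 1) (hk : 1 ≤ k) (hm : 0 < m) :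
    (𝒢).dominationNumber = k + 1 := by
  simpa [deleteEdges_empty] using dominationNumber_deleteEdges_eq ∅ hn hk (by simpa using hm)

theorem dominationNumber_deleteEdges_eq_self {k : ℕ} (hn : n = 3 * k + 1) (hk : 1 ≤ k)
    (hZ : 2 * Z.card < 3 * m) : ((𝒢).deleteEdges ↑Z).dominationNumber = (𝒢).dominationNumber := by
  rw [dominationNumber_deleteEdges_eq Z hn hk hZ, dominationNumber_eq hn hk (by omega)]

end CompleteStrongPath

/-- **Lemma.** If `m ≥ 2`, `n ≥ 2` and `n ≡ 1 (mod 3)`, then `b(K_m ⊠ P_n) ≥ ⌈3m/2⌉`;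
equivalently, removing any set of fewer than `⌈3m/2⌉` edges does not change the
domination number. -/
theorem bondage_ge_of_mod_three_eq_one (m n : ℕ) (hm : 2 ≤ m) (hn : 2 ≤ n)
    (h3 : n % 3 = 1) :
    (3 * m + 1) / 2 ≤ ((⊤ : SimpleGraph (Fin m)) ⊠ pathGraph n).bondageNumber ∧
    ∀ Z : Finset (Sym2 (Fin m × Fin n)),
      (↑Z : Set (Sym2 (Fin m × Fin n))) ⊆
          ((⊤ : SimpleGraph (Fin m)) ⊠ pathGraph n).edgeSet →
      Z.card < (3 * m + 1) / 2 →
      (((⊤ : SimpleGraph (Fin m)) ⊠ pathGraph n).deleteEdges ↑Z).dominationNumber =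
        ((⊤ : SimpleGraph (Fin m)) ⊠ pathGraph n).dominationNumber := by
  obtain ⟨k, rfl⟩ : ∃ k, n = 3 * k + 1 := ⟨n / 3, by omega⟩
  have hk : 1 ≤ k := by omega
  have hstable := fun (Z : Finset (Sym2 (Fin m × Fin (3 * k + 1))))
      (hZ : Z.card < (3 * m + 1) / 2) =>
    CompleteStrongPath.dominationNumber_deleteEdges_eq_self Z rfl hk (by omega)
  refine ⟨le_bondageNumber _ ?_ fun Z _ hZ => (hstable Z hZ).le, fun Z _ hZ => hstable Z hZ⟩
  rw [CompleteStrongPath.dominationNumber_eq rfl hk (by omega), Fintype.card_prod,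
    Fintype.card_fin, Fintype.card_fin]
  nlinarith
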